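/- Let H₁, H₂ be Hilbert spaces, H = H₁ × H₂, and let L₁ : H₁ → K, L₂ : H₂ → K be bounded linear operators into a Hilbert space K. Let P₁, P₂ : K → K be orthogonal projections (multiplication by characteristic functions of subsets). Define A : H → H by A(v¹,v²) = (L₁*(P₁(L₁v¹ + L₂v²)) + α₁v¹, L₂*(P₂(L₁v¹ + L₂v²)) + α₂v²). If δᵢ := αᵢ − (1/4)‖Lᵢ‖² > 0 for i = 1,2, then ⟨A(v¹,v²),(v¹,v²)⟩_H ≥ min(δ₁,δ₂)·‖(v¹,v²)‖²_H for all (v¹,v²) ∈ H. -/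

import Mathlib

lemma nash_aux {K : Type*} [NormedAddCommGroup K] [InnerProductSpace ℝ K]
    [CompleteSpace K] (P : K →L[ℝ] K) (hsa : IsSelfAdjoint P)
    (hid : P ∘L P = P) (hn : ‖P‖ ≤ 1) (x y : K) :
    -((1/4) * ‖y‖ ^ 2) ≤ (inner ℝ (P (x + y)) x : ℝ) := by
  have hadj : P.adjoint = P := hsa
  have h1 : (inner ℝ (P (x + y)) x : ℝ) = inner ℝ (P (x + y)) (P x) := by
    have e1 : (inner ℝ (P (x + y)) x : ℝ) = inner ℝ (x + y) (P x) := by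
      rw [← hadj, ContinuousLinearMap.adjoint_inner_left, hadj]
    have e2 : (inner ℝ (P (x + y)) (P x) : ℝ) = inner ℝ (x + y) (P (P x)) := by
      rw [← hadj, ContinuousLinearMap.adjoint_inner_left, hadj]
    have : P (P x) = P x := by
      have := congrArg (fun T : K →L[ℝ] K => T x) hid
      simpa using this
    rw [e1, e2, this]
  rw [h1, map_add, inner_add_left, real_inner_self_eq_norm_sq]
  have hPy : ‖P y‖ ≤ ‖y‖ := by
    calc ‖P y‖ ≤ ‖P‖ * ‖y‖ := P.le_opNorm y
    _ ≤ 1 * ‖y‖ := by gcongr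
    _ = ‖y‖ := one_mul _
  have hcs : |(inner ℝ (P y) (P x) : ℝ)| ≤ ‖P y‖ * ‖P x‖ := abs_real_inner_le_norm _ _
  have h2 : -(‖P y‖ * ‖P x‖) ≤ (inner ℝ (P y) (P x) : ℝ) := (abs_le.mp hcs).1
  nlinarith [norm_nonneg (P x), norm_nonneg (P y), norm_nonneg y,
    sq_nonneg (‖P x‖ - ‖P y‖ / 2), sq_nonneg (‖P x‖ - ‖y‖ / 2)]

/-- Coercivity of the operator `A(v¹,v²) = (L₁*(P₁(L₁v¹+L₂v²)) + α₁v¹, L₂*(P₂(L₁v¹+L₂v²)) + α₂v²)`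
on the product Hilbert space `H = H₁ × H₂` (inner products and norms written componentwise). -/
theorem nash_operator_coercive
    {H₁ H₂ K : Type*}
    [NormedAddCommGroup H₁] [InnerProductSpace ℝ H₁] [CompleteSpace H₁]
    [NormedAddCommGroup H₂] [InnerProductSpace ℝ H₂] [CompleteSpace H₂]
    [NormedAddCommGroup K] [InnerProductSpace ℝ K] [CompleteSpace K]
    (L₁ : H₁ →L[ℝ] K) (L₂ : H₂ →L[ℝ] K)
    (P₁ P₂ : K →L[ℝ] K)
    (hP₁sa : IsSelfAdjoint P₁) (hP₂sa : IsSelfAdjoint P₂)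
    (hP₁idem : P₁ ∘L P₁ = P₁) (hP₂idem : P₂ ∘L P₂ = P₂)
    (hP₁norm : ‖P₁‖ ≤ 1) (hP₂norm : ‖P₂‖ ≤ 1)
    (α₁ α₂ : ℝ) (hα₁ : 0 < α₁) (hα₂ : 0 < α₂)
    (hδ₁ : 0 < α₁ - (1 / 4) * ‖L₁‖ ^ 2) (hδ₂ : 0 < α₂ - (1 / 4) * ‖L₂‖ ^ 2) :
    ∀ (v₁ : H₁) (v₂ : H₂),
      min (α₁ - (1 / 4) * ‖L₁‖ ^ 2) (α₂ - (1 / 4) * ‖L₂‖ ^ 2) * (‖v₁‖ ^ 2 + ‖v₂‖ ^ 2) ≤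
        (inner ℝ (L₁.adjoint (P₁ (L₁ v₁ + L₂ v₂)) + α₁ • v₁) v₁ : ℝ) +
          (inner ℝ (L₂.adjoint (P₂ (L₁ v₁ + L₂ v₂)) + α₂ • v₂) v₂ : ℝ) := by
  intro v₁ v₂
  have h1 : (inner ℝ (L₁.adjoint (P₁ (L₁ v₁ + L₂ v₂)) + α₁ • v₁) v₁ : ℝ)
      = (inner ℝ (P₁ (L₁ v₁ + L₂ v₂)) (L₁ v₁) : ℝ) + α₁ * ‖v₁‖ ^ 2 := by
    rw [inner_add_left, ContinuousLinearMap.adjoint_inner_left,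
      real_inner_smul_left, real_inner_self_eq_norm_sq]
  have h2 : (inner ℝ (L₂.adjoint (P₂ (L₁ v₁ + L₂ v₂)) + α₂ • v₂) v₂ : ℝ)
      = (inner ℝ (P₂ (L₂ v₂ + L₁ v₁)) (L₂ v₂) : ℝ) + α₂ * ‖v₂‖ ^ 2 := by
    rw [inner_add_left, ContinuousLinearMap.adjoint_inner_left,
      real_inner_smul_left, real_inner_self_eq_norm_sq, add_comm (L₁ v₁)]
  have b1 : -((1/4) * ‖L₂ v₂‖ ^ 2) ≤ (inner ℝ (P₁ (L₁ v₁ + L₂ v₂)) (L₁ v₁) : ℝ) :=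
    nash_aux P₁ hP₁sa hP₁idem hP₁norm (L₁ v₁) (L₂ v₂)
  have b2 : -((1/4) * ‖L₁ v₁‖ ^ 2) ≤ (inner ℝ (P₂ (L₂ v₂ + L₁ v₁)) (L₂ v₂) : ℝ) :=
    nash_aux P₂ hP₂sa hP₂idem hP₂norm (L₂ v₂) (L₁ v₁)
  have hL1 : ‖L₁ v₁‖ ≤ ‖L₁‖ * ‖v₁‖ := L₁.le_opNorm v₁
  have hL2 : ‖L₂ v₂‖ ≤ ‖L₂‖ * ‖v₂‖ := L₂.le_opNorm v₂
  have hmin1 : min (α₁ - (1 / 4) * ‖L₁‖ ^ 2) (α₂ - (1 / 4) * ‖L₂‖ ^ 2)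
      ≤ α₁ - (1 / 4) * ‖L₁‖ ^ 2 := min_le_left _ _
  have hmin2 : min (α₁ - (1 / 4) * ‖L₁‖ ^ 2) (α₂ - (1 / 4) * ‖L₂‖ ^ 2)
      ≤ α₂ - (1 / 4) * ‖L₂‖ ^ 2 := min_le_right _ _
  rw [h1, h2]
  nlinarith [sq_nonneg ‖v₁‖, sq_nonneg ‖v₂‖, norm_nonneg (L₁ v₁), norm_nonneg (L₂ v₂),
    norm_nonneg v₁, norm_nonneg v₂, norm_nonneg L₁, norm_nonneg L₂,
    mul_le_mul hL1 hL1 (norm_nonneg _) (by positivity),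
    mul_le_mul hL2 hL2 (norm_nonneg _) (by positivity)]
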